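/- arXiv:0802.3843 — 4 statements merged into one kernel-verified Lean document; each statement's English description precedes it below -/
import Mathlib

section
/- Let K be a field containing a primitive n-th root of unity, and let L = K(α^{1/n}) be a cyclic Kummer extension of degree n for some α ∈ K*. If β ∈ K* also satisfies L = K(β^{1/n}), then β = α^k · γ^n for some integer k coprime to n and some γ ∈ K*. -/
open Polynomial

/-- If `L = K[x]`, the degree of the minimal polynomial of `x` is `[L : K]`. -/
lemma natDegree_minpoly_of_adjoin_singleton_eq_top
    {K L : Type*} [Field K] [Field L] [Algebra K L] [FiniteDimensional K L]
    {x : L} (hx : Algebra.adjoin K ({x} : Set L) = ⊤) :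
    (minpoly K x).natDegree = Module.finrank K L := by
  have hix : IsIntegral K x := IsIntegral.of_finite K x
  let pb : PowerBasis K L := (Algebra.adjoin.powerBasis hix).map
    ((Subalgebra.equivOfEq _ _ hx).trans Subalgebra.topEquiv)
  have h := pb.finrank
  simpa [pb] using h.symm

/-- Let `K` be a field containing a primitive `n`-th root of unity and
`L = K(α^{1/n})` a cyclic Kummer extension of degree `n` for some `α ∈ K*`.
If `β ∈ K*` also satisfies `L = K(β^{1/n})`, then `β = α^k · γ^n` for some
integer `k` coprime to `n` and some `γ ∈ K*`. -/
theorem kummer_generators_power_relation {K L : Type*} [Field K] [Field L] [Algebra K L]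
    (n : ℕ) (hn : 0 < n) (hchar : (n : K) ≠ 0)
    (ζ : K) (hζ : IsPrimitiveRoot ζ n)
    (α β : K) (hα : α ≠ 0) (hβ : β ≠ 0)
    (a b : L) (ha : a ^ n = algebraMap K L α) (hb : b ^ n = algebraMap K L β)
    (hdeg : Module.finrank K L = n)
    (hLa : Algebra.adjoin K ({a} : Set L) = ⊤)
    (hLb : Algebra.adjoin K ({b} : Set L) = ⊤) :
    ∃ (k : ℕ) (γ : K), Nat.Coprime k n ∧ γ ≠ 0 ∧ β = α ^ k * γ ^ n := by
  have : NeZero n := ⟨hn.ne'⟩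
  have halg : Function.Injective (algebraMap K L) := (algebraMap K L).injective
  have hfin : FiniteDimensional K L := by
    have h : 0 < Module.finrank K L := hdeg ▸ hn
    exact FiniteDimensional.of_finrank_pos h
  have hia : IsIntegral K a := IsIntegral.of_finite K a
  have hib : IsIntegral K b := IsIntegral.of_finite K b
  have hna : (minpoly K a).natDegree = n := by
    rw [natDegree_minpoly_of_adjoin_singleton_eq_top hLa, hdeg]
  have hnb : (minpoly K b).natDegree = n := by
    rw [natDegree_minpoly_of_adjoin_singleton_eq_top hLb, hdeg]
  have hb0 : b ≠ 0 := by
    intro h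
    apply hβ
    apply halg
    rw [map_zero, ← hb, h, zero_pow hn.ne']
  -- the minimal polynomial of `a` is `X ^ n - C α`
  have hmin : minpoly K a = X ^ n - C α := by
    have hmonic : (X ^ n - C α).Monic := monic_X_pow_sub_C α hn.ne'
    have hdvd : minpoly K a ∣ X ^ n - C α := minpoly.dvd K a (by simp [ha])
    exact (Polynomial.eq_of_monic_of_dvd_of_natDegree_le (minpoly.monic hia) hmonic hdvd
      (by rw [natDegree_X_pow_sub_C, hna])).symm
  -- power basis of `L` with generator `a`
  let pb : PowerBasis K L := (Algebra.adjoin.powerBasis hia).map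
    ((Subalgebra.equivOfEq _ _ hLa).trans Subalgebra.topEquiv)
  have hgen : pb.gen = a := by simp [pb]
  have hdim : pb.dim = n := by simp [pb, hna]
  set ζ' : L := algebraMap K L ζ with hζ'def
  have hζ' : IsPrimitiveRoot ζ' n := hζ.map_of_injective halg
  -- the endomorphism sending a to ζ' * a
  have hroot : aeval (ζ' * a) (minpoly K pb.gen) = 0 := by
    rw [hgen, hmin]
    simp only [map_sub, map_pow, aeval_X, aeval_C]
    rw [mul_pow, hζ'def, ← map_pow, hζ.pow_eq_one, map_one, one_mul, ha, sub_self]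
  set σ : L →ₐ[K] L := pb.lift (ζ' * a) hroot with hσdef
  have hσa : σ a = ζ' * a := by rw [← hgen]; exact pb.lift_gen _ hroot
  -- σ b = ζ'^k * b for some k < n
  have hσbn : (σ b) ^ n = b ^ n := by
    rw [← map_pow, hb, AlgHom.commutes]
  have hu : (σ b / b) ^ n = 1 := by
    rw [div_pow, hσbn, div_self (pow_ne_zero _ hb0)]
  obtain ⟨k, hk, hζk⟩ := hζ'.eq_pow_of_pow_eq_one hu
  have hσb : σ b = ζ' ^ k * b := by
    rw [hζk]; field_simp
  -- expand b in the power basis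
  set c : Fin pb.dim → K := fun i => pb.basis.repr b i with hcdef
  have hsum : ∑ i, c i • pb.gen ^ (i : ℕ) = b := by
    conv_rhs => rw [← pb.basis.sum_repr b]
    exact Finset.sum_congr rfl fun i _ => by rw [pb.basis_eq_pow]
  have e1 : σ b = ∑ i, (c i * ζ ^ (i : ℕ)) • pb.basis i := by
    rw [← hsum, map_sum]
    refine Finset.sum_congr rfl fun i _ => ?_
    rw [map_smul, map_pow, pb.basis_eq_pow, hgen, hσa, mul_pow, hζ'def, ← map_pow,
      ← Algebra.smul_def, smul_smul]
  have e2 : σ b = ∑ i, (c i * ζ ^ k) • pb.basis i := by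
    rw [hσb, ← hsum, Finset.mul_sum]
    refine Finset.sum_congr rfl fun i _ => ?_
    rw [pb.basis_eq_pow, hgen, hζ'def, ← map_pow, ← Algebra.smul_def, smul_smul,
      mul_comm (ζ ^ k) (c i)]
  have key : ∀ i : Fin pb.dim, c i * ζ ^ (i : ℕ) = c i * ζ ^ k := by
    intro i
    have h := e1.symm.trans e2
    have h2 : ⇑(pb.basis.repr (∑ i, (c i * ζ ^ (i : ℕ)) • pb.basis i)) =
        ⇑(pb.basis.repr (∑ i, (c i * ζ ^ k) • pb.basis i)) := by rw [h]
    rw [pb.basis.repr_sum_self, pb.basis.repr_sum_self] at h2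
    exact congrFun h2 i
  set k' : Fin pb.dim := ⟨k, hdim ▸ hk⟩ with hk'def
  have hzero : ∀ i : Fin pb.dim, i ≠ k' → c i = 0 := by
    intro i hi
    by_contra hci
    have := mul_left_cancel₀ hci (key i)
    exact hi (Fin.ext (hζ.pow_inj (hdim ▸ i.isLt) hk this))
  have hbval : b = c k' • a ^ k := by
    rw [← hsum, Finset.sum_eq_single k' (fun i _ hi => by rw [hzero i hi, zero_smul])
      (fun h => absurd (Finset.mem_univ k') h), hgen]
  set γ : K := c k' with hγdef
  have hγ0 : γ ≠ 0 := by
    intro h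
    rw [hbval, h, zero_smul] at hb0
    exact hb0 rfl
  have hβval : β = α ^ k * γ ^ n := by
    apply halg
    rw [← hb, hbval, _root_.smul_pow, ← pow_mul, mul_comm k n, pow_mul, ha, Algebra.smul_def,
      ← map_pow (algebraMap K L) α k, ← map_mul]
    exact congrArg _ (mul_comm _ _)
  refine ⟨k, γ, ?_, hγ0, hβval⟩
  -- coprimality
  by_contra hcop
  set g := Nat.gcd k n with hg
  have hdn : g ∣ n := Nat.gcd_dvd_right k n
  have hdk : g ∣ k := Nat.gcd_dvd_left k n
  have hd0 : 0 < g := Nat.gcd_pos_of_pos_right _ hn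
  have hd1 : g ≠ 1 := hcop
  obtain ⟨n', hn'⟩ := hdn
  obtain ⟨k', hk'eq⟩ := hdk
  have hn'0 : 0 < n' := by
    rcases Nat.eq_zero_or_pos n' with h | h
    · subst h; rw [mul_zero] at hn'; omega
    · exact h
  have hkm : k * n' = k' * n := by rw [hk'eq, hn']; ring
  have hbm : b ^ n' = algebraMap K L (γ ^ n' * α ^ k') := by
    rw [hbval, _root_.smul_pow, ← pow_mul, hkm, mul_comm k' n, pow_mul, ha, Algebra.smul_def,
      ← map_pow (algebraMap K L) α k', ← map_mul]
  have hdvd : minpoly K b ∣ X ^ n' - C (γ ^ n' * α ^ k') :=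
    minpoly.dvd K b (by simp [map_sub, map_pow, aeval_X, aeval_C, hbm])
  have hle : (minpoly K b).natDegree ≤ n' := by
    have h := Polynomial.natDegree_le_of_dvd hdvd (monic_X_pow_sub_C _ hn'0.ne').ne_zero
    rwa [natDegree_X_pow_sub_C] at h
  rw [hnb] at hle
  have h2 : 2 * n' ≤ g * n' := Nat.mul_le_mul_right _ (by omega)
  have h3 : n' < n := lt_of_lt_of_le (by omega : n' < 2 * n') (hn' ▸ h2)
  omega
end

section
/- Let K be a number field containing a primitive n-th root of unity, and S a finite set of places of K containing all infinite places such that the classes of the finite primes in S generate Cl_K/Cl_K^n. Then every α ∈ K* such that K(α^{1/n})/K is unramified outside S lies in U_S · (K*)^n, where U_S is the group of S-units. -/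
open NumberField IsDedekindDomain IsDedekindDomain.HeightOneSpectrum FractionalIdeal WithZero
open scoped nonZeroDivisors

/-!
At a prime `w` of `L` above a prime `v ∉ S` the extension is unramified, so
`v(α) = w(α) = n • w(x)`: thus `(α) = 𝔟ⁿ 𝔠` with `𝔠` supported on `S`. The class of `𝔟ⁿ`
then lies in the subgroup `H` of `Cl_K` generated by the classes of the primes of `S`. Since
`H` and the `n`-th powers generate the finite group `Cl_K`, the `n`-th power map of `Cl_K / H`
is onto, hence injective, so `[𝔟] ∈ H`, i.e. `𝔟 = (γ) 𝔡` with `𝔡` supported on `S`. Finally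
`α / γⁿ` generates `𝔠 𝔡ⁿ`, so it is an `S`-unit.
-/

theorem Subgroup.mem_of_pow_mem_of_sup_range_powMonoidHom_eq_top {G : Type*} [CommGroup G]
    [Finite G] {H : Subgroup G} {n : ℕ} (hH : H ⊔ (powMonoidHom n).range = ⊤) {g : G}
    (hg : g ^ n ∈ H) : g ∈ H := by
  have hsurj : Function.Surjective (powMonoidHom n : G ⧸ H →* G ⧸ H) := by
    intro q
    obtain ⟨c, rfl⟩ := QuotientGroup.mk_surjective q
    obtain ⟨h, hh, _, ⟨d, rfl⟩, rfl⟩ := Subgroup.mem_sup.mp (hH ▸ Subgroup.mem_top c)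
    refine ⟨d, ?_⟩
    rw [powMonoidHom_apply, ← QuotientGroup.mk_pow, QuotientGroup.eq_iff_div_mem]
    simpa [powMonoidHom_apply] using H.inv_mem hh
  rw [← QuotientGroup.eq_one_iff]
  refine Finite.injective_iff_surjective.mpr hsurj ?_
  rw [map_one, powMonoidHom_apply, ← QuotientGroup.mk_pow, QuotientGroup.eq_one_iff]
  exact hg

section DedekindDomain

variable {R F : Type*} [CommRing R] [IsDedekindDomain R] [Field F] [Algebra R F]
  [IsFractionRing R F]

theorem IsDedekindDomain.HeightOneSpectrum.valuation_eq_exp_neg_count (v : HeightOneSpectrum R)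
    {x : F} (hx : x ≠ 0) : v.valuation F x = exp (-count F v (spanSingleton R⁰ x)) := by
  have hint : ∀ r : R, r ≠ 0 → v.valuation F (algebraMap R F r) =
      exp (-count F v (spanSingleton R⁰ (algebraMap R F r))) := by
    intro r hr
    rw [valuation_of_algebraMap, intValuation_if_neg _ hr, ← coeIdeal_span_singleton,
      count_coe F v (by simpa using hr)]
  have hspan : ∀ r : R, r ≠ 0 → spanSingleton R⁰ (algebraMap R F r) ≠ 0 := fun r hr => by
    rwa [ne_eq, spanSingleton_eq_zero_iff, map_eq_zero_iff _ (IsFractionRing.injective R F)]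
  obtain ⟨r, s, hs, rfl⟩ := IsFractionRing.div_surjective (A := R) x
  have hs0 : s ≠ 0 := nonZeroDivisors.ne_zero hs
  have hr0 : r ≠ 0 := by rintro rfl; simp at hx
  rw [map_div₀, hint r hr0, hint s hs0, div_eq_mul_inv, div_eq_mul_inv,
    ← spanSingleton_mul_spanSingleton, ← spanSingleton_inv,
    count_mul F v (hspan r hr0) (inv_ne_zero (hspan s hs0)), count_inv, ← exp_neg, ← exp_add,
    neg_add]

namespace FractionalIdeal

variable (F)

theorem count_units_mul (v : HeightOneSpectrum R) (I J : (FractionalIdeal R⁰ F)ˣ) :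
    count F v ↑(I * J) = count F v I + count F v J := by
  rw [Units.val_mul, count_mul F v I.ne_zero J.ne_zero]

theorem count_units_inv (v : HeightOneSpectrum R) (I : (FractionalIdeal R⁰ F)ˣ) :
    count F v ↑I⁻¹ = -count F v I := by
  rw [Units.val_inv_eq_inv_val, count_inv]

theorem count_units_pow (v : HeightOneSpectrum R) (I : (FractionalIdeal R⁰ F)ˣ) (n : ℕ) :
    count F v ↑(I ^ n) = n * count F v I := by
  rw [Units.val_pow_eq_pow_val, count_pow]

theorem exists_units_count_eq (e : HeightOneSpectrum R → ℤ)
    (he : ∀ᶠ v in Filter.cofinite, e v = 0) :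
    ∃ I : (FractionalIdeal R⁰ F)ˣ, ∀ v, count F v I = e v :=
  ⟨Units.mk0 _ (finprod_ne_zero fun v => zpow_ne_zero (e v) (coeIdeal_ne_zero.mpr v.ne_bot)),
    fun v => count_finprod F v e he⟩

end FractionalIdeal

variable (F) in
def unitsSupportedOn (S : Set (HeightOneSpectrum R)) : Subgroup (FractionalIdeal R⁰ F)ˣ where
  carrier := {I | ∀ v ∉ S, count F v I = 0}
  mul_mem' {I J} hI hJ v hv := by rw [count_units_mul, hI v hv, hJ v hv, add_zero]
  one_mem' v _ := count_one F v
  inv_mem' {I} hI v hv := by rw [count_units_inv, hI v hv, neg_zero]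

def classesOfPrimes (S : Set (HeightOneSpectrum R)) : Set (ClassGroup R) :=
  {c | ∃ p ∈ S, ∃ h : p.asIdeal ∈ (Ideal R)⁰, c = ClassGroup.mk0 ⟨p.asIdeal, h⟩}

variable (F) in
theorem classesOfPrimes_subset_map_unitsSupportedOn (S : Set (HeightOneSpectrum R)) :
    classesOfPrimes S ⊆ (unitsSupportedOn F S).map (ClassGroup.mk F) := by
  rintro _ ⟨p, hp, h, rfl⟩
  refine ⟨FractionalIdeal.mk0 F ⟨p.asIdeal, h⟩, fun v hv => ?_, ClassGroup.mk_mk0 F _⟩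
  rw [FractionalIdeal.coe_mk0, count_maximal_coprime F v (ne_of_mem_of_not_mem hp hv)]

theorem ClassGroup.mk_eq_one_iff_mem_range {I : (FractionalIdeal R⁰ F)ˣ} :
    ClassGroup.mk F I = 1 ↔ I ∈ (toPrincipalIdeal R F).range := by
  rw [ClassGroup.mk_eq_one_iff, isPrincipal_iff, mem_principal_ideals_iff]
  exact exists_congr fun _ => eq_comm

theorem exists_eq_mul_pow_of_dvd_count [Finite (ClassGroup R)] {S : Set (HeightOneSpectrum R)}
    {n : ℕ} (hgen : Subgroup.closure (classesOfPrimes S ∪ {c | ∃ d, c = d ^ n}) = ⊤) (α : Fˣ)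
    (hα : ∀ v ∉ S, (n : ℤ) ∣ count F v (spanSingleton R⁰ (α : F))) :
    ∃ u γ : Fˣ, toPrincipalIdeal R F u ∈ unitsSupportedOn F S ∧ α = u * γ ^ n := by
  classical
  set H := (unitsSupportedOn F S).map (ClassGroup.mk F)
  have hH : H ⊔ (powMonoidHom n).range = ⊤ := by
    rw [eq_top_iff, ← hgen, Subgroup.closure_le]
    rintro _ (hc | ⟨d, rfl⟩)
    · exact Subgroup.mem_sup_left (classesOfPrimes_subset_map_unitsSupportedOn F S hc)
    · exact Subgroup.mem_sup_right ⟨d, rfl⟩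
  obtain ⟨B, hB⟩ := exists_units_count_eq F
    (fun v => if v ∈ S then 0 else count F v (spanSingleton R⁰ (α : F)) / n)
    ((finite_factors (spanSingleton R⁰ (α : F))).mono fun v h0 => by simp [h0])
  have hC : toPrincipalIdeal R F α * (B ^ n)⁻¹ ∈ unitsSupportedOn F S := fun v hv => by
    rw [count_units_mul, count_units_inv, count_units_pow, hB, if_neg hv, coe_toPrincipalIdeal,
      Int.mul_ediv_cancel' (hα v hv), add_neg_cancel]
  have hBH : ClassGroup.mk F B ∈ H := by
    refine Subgroup.mem_of_pow_mem_of_sup_range_powMonoidHom_eq_top hH ?_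
    have hα1 : ClassGroup.mk F (toPrincipalIdeal R F α) = 1 :=
      ClassGroup.mk_eq_one_iff_mem_range.mpr ⟨α, rfl⟩
    have hBn : ClassGroup.mk F (B ^ n) =
        (ClassGroup.mk F (toPrincipalIdeal R F α * (B ^ n)⁻¹))⁻¹ := by
      rw [map_mul, map_inv, hα1, one_mul, inv_inv]
    rw [← map_pow, hBn]
    exact H.inv_mem ⟨_, hC, rfl⟩
  obtain ⟨D, hD, hDB⟩ := hBH
  obtain ⟨γ, hγ⟩ : B * D⁻¹ ∈ (toPrincipalIdeal R F).range := by
    rw [← ClassGroup.mk_eq_one_iff_mem_range, map_mul, map_inv, hDB, mul_inv_cancel]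
  refine ⟨α * (γ ^ n)⁻¹, γ, ?_, (inv_mul_cancel_right α (γ ^ n)).symm⟩
  have hu : toPrincipalIdeal R F (α * (γ ^ n)⁻¹) =
      toPrincipalIdeal R F α * (B ^ n)⁻¹ * D ^ n := by
    rw [map_mul, map_inv, map_pow, hγ, mul_pow, mul_inv, inv_pow, inv_inv, mul_assoc]
  rw [hu]
  exact mul_mem hC (pow_mem hD n)

end DedekindDomain

theorem dvd_count_of_pow_eq_of_ramificationIdx'_eq_one {A K : Type*} (L : Type*) {B : Type*}
    [CommRing A] [IsDedekindDomain A] [CommRing B] [IsDedekindDomain B] [Algebra A B]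
    [Module.IsTorsionFree A B] [Field K] [Field L] [Algebra K L] [Algebra A K]
    [IsFractionRing A K] [Algebra A L] [IsScalarTower A K L] [Algebra B L] [IsFractionRing B L]
    [IsScalarTower A B L] (v : HeightOneSpectrum A) (w : HeightOneSpectrum B)
    [w.asIdeal.LiesOver v.asIdeal] (he : v.asIdeal.ramificationIdx' w.asIdeal = 1) {a : K}
    (ha : a ≠ 0) {x : L} {n : ℕ} (hx : x ^ n = algebraMap K L a) :
    (n : ℤ) ∣ count K v (spanSingleton A⁰ a) := by
  have hval : v.valuation K a = w.valuation L x ^ n := by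
    rw [← pow_one (v.valuation K a), ← he, valuation_liesOver L v w, ← hx, map_pow]
  have hlog := congrArg log hval
  rw [v.valuation_eq_exp_neg_count ha, log_exp, log_pow, nsmul_eq_mul] at hlog
  exact ⟨-log (w.valuation L x), by linarith⟩

theorem mem_sUnits_mul_nth_powers_of_unramified_outside_S_general
    {K L : Type*} [Field K] [NumberField K] [Field L] [NumberField L] [Algebra K L]
    (n : ℕ)
    (S : Finset (HeightOneSpectrum (𝓞 K)))
    -- the classes of the primes in `S` generate `Cl_K/Cl_Kⁿ`
    (hgen : Subgroup.closure
        ({c : ClassGroup (𝓞 K) | ∃ p ∈ S, ∃ h : p.asIdeal ∈ (Ideal (𝓞 K))⁰,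
            c = ClassGroup.mk0 ⟨p.asIdeal, h⟩} ∪
          {c : ClassGroup (𝓞 K) | ∃ d : ClassGroup (𝓞 K), c = d ^ n}) = ⊤)
    (α : Kˣ) (x : L) (hx : x ^ n = algebraMap K L (α : K))
    -- `K(α^{1/n})/K` is unramified outside `S`
    (hunr : ∀ v : HeightOneSpectrum (𝓞 K), v ∉ S →
      ∀ w : HeightOneSpectrum (𝓞 L),
        w.asIdeal.comap (algebraMap (𝓞 K) (𝓞 L)) = v.asIdeal →
          Ideal.ramificationIdx' v.asIdeal w.asIdeal = 1) :
    ∃ u γ : Kˣ, (∀ v : HeightOneSpectrum (𝓞 K), v ∉ S → v.valuation K ((u : K)) = 1) ∧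
      α = u * γ ^ n := by
  have hdvd : ∀ v ∉ (S : Set (HeightOneSpectrum (𝓞 K))),
      (n : ℤ) ∣ count K v (spanSingleton (𝓞 K)⁰ (α : K)) := by
    intro v hv
    obtain ⟨P, hPmax, hPv⟩ :=
      Ideal.exists_maximal_ideal_liesOver_of_isIntegral (S := 𝓞 L) v.asIdeal
    let w : HeightOneSpectrum (𝓞 L) :=
      ⟨P, hPmax.isPrime, Ideal.ne_bot_of_liesOver_of_ne_bot v.ne_bot P⟩
    exact dvd_count_of_pow_eq_of_ramificationIdx'_eq_one L v w (hunr v hv w hPv.over.symm)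
      α.ne_zero hx
  obtain ⟨u, γ, hu, rfl⟩ := exists_eq_mul_pow_of_dvd_count hgen α hdvd
  refine ⟨u, γ, fun v hv => ?_, rfl⟩
  rw [v.valuation_eq_exp_neg_count u.ne_zero, ← coe_toPrincipalIdeal, hu v hv, neg_zero,
    exp_zero]

/-- Let `K` be a number field containing a primitive `n`-th root of unity and `S` a finite
set of places of `K` containing all infinite places (encoded by its set `S` of finite
primes) such that the classes of the finite primes in `S` generate `Cl_K/Cl_Kⁿ`.  If
`α ∈ K*` is such that `K(α^{1/n})/K` is unramified outside `S`, then `α ∈ U_S · (K*)ⁿ`,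
where `U_S` is the group of `S`-units. -/
theorem mem_sUnits_mul_nth_powers_of_unramified_outside_S
    {K L : Type*} [Field K] [NumberField K] [Field L] [NumberField L] [Algebra K L]
    (n : ℕ) (hn : 0 < n) (ζ : K) (hζ : IsPrimitiveRoot ζ n)
    (S : Finset (HeightOneSpectrum (𝓞 K)))
    -- the classes of the primes in `S` generate `Cl_K/Cl_Kⁿ`
    (hgen : Subgroup.closure
        ({c : ClassGroup (𝓞 K) | ∃ p ∈ S, ∃ h : p.asIdeal ∈ (Ideal (𝓞 K))⁰,
            c = ClassGroup.mk0 ⟨p.asIdeal, h⟩} ∪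
          {c : ClassGroup (𝓞 K) | ∃ d : ClassGroup (𝓞 K), c = d ^ n}) = ⊤)
    (α : Kˣ) (x : L) (hx : x ^ n = algebraMap K L (α : K))
    -- `L = K(α^{1/n})`
    (hL : Algebra.adjoin K ({x} : Set L) = ⊤)
    -- `K(α^{1/n})/K` is unramified outside `S`
    (hunr : ∀ v : HeightOneSpectrum (𝓞 K), v ∉ S →
      ∀ w : HeightOneSpectrum (𝓞 L),
        w.asIdeal.comap (algebraMap (𝓞 K) (𝓞 L)) = v.asIdeal →
          Ideal.ramificationIdx' v.asIdeal w.asIdeal = 1) :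
    ∃ u γ : Kˣ, (∀ v : HeightOneSpectrum (𝓞 K), v ∉ S → v.valuation K ((u : K)) = 1) ∧
      α = u * γ ^ n :=
  mem_sUnits_mul_nth_powers_of_unramified_outside_S_general n S hgen α x hx hunr
end

section
/- Let K be an imaginary quadratic field with ring of integers Z_K. The set of homothety classes of lattices Λ ⊂ C with {λ ∈ C : λΛ ⊆ Λ} = Z_K is in bijection with the ideal class group Cl_K of K; in particular, there are exactly h_K = #Cl_K isomorphism classes of complex elliptic curves with CM by Z_K. -/
open NumberField

/-- A lattice in `ℂ`: a discrete additive subgroup spanning `ℂ` over `ℝ`. -/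
def IsComplexLattice (Λ : AddSubgroup ℂ) : Prop :=
  DiscreteTopology Λ ∧ Submodule.span ℝ (Λ : Set ℂ) = ⊤

/-- The multiplier ring `{λ ∈ ℂ : λΛ ⊆ Λ}` of a lattice. -/
def multiplierRing (Λ : AddSubgroup ℂ) : Set ℂ :=
  {lam : ℂ | ∀ w ∈ Λ, lam * w ∈ Λ}

/-- Two subgroups of `ℂ` are homothetic if one is a nonzero scalar multiple of the other. -/
def Homothetic (Λ Λ' : AddSubgroup ℂ) : Prop :=
  ∃ lam : ℂ, lam ≠ 0 ∧ AddSubgroup.map (AddMonoidHom.mulLeft lam) Λ = Λ'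

lemma map_mulLeft_map_mulLeft (μ lam : ℂ) (Λ : AddSubgroup ℂ) :
    AddSubgroup.map (AddMonoidHom.mulLeft μ) (AddSubgroup.map (AddMonoidHom.mulLeft lam) Λ)
      = AddSubgroup.map (AddMonoidHom.mulLeft (μ * lam)) Λ := by
  rw [AddSubgroup.map_map]
  congr 1
  ext z
  simp [mul_assoc]

lemma map_mulLeft_one (Λ : AddSubgroup ℂ) :
    AddSubgroup.map (AddMonoidHom.mulLeft (1 : ℂ)) Λ = Λ := by
  ext z
  simp [AddSubgroup.mem_map]

/-- Homothety, as a setoid on the lattices with a given multiplier ring `R ⊆ ℂ`. -/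
def CMLatticeSetoid (R : Set ℂ) :
    Setoid {Λ : AddSubgroup ℂ // IsComplexLattice Λ ∧ multiplierRing Λ = R} where
  r Λ Λ' := Homothetic Λ.1 Λ'.1
  iseqv := by
    constructor
    · exact fun Λ => ⟨1, one_ne_zero, map_mulLeft_one Λ.1⟩
    · rintro Λ Λ' ⟨lam, hlam, h⟩
      exact ⟨lam⁻¹, inv_ne_zero hlam, by
        rw [← h, map_mulLeft_map_mulLeft, inv_mul_cancel₀ hlam, map_mulLeft_one]⟩
    · rintro Λ Λ' Λ'' ⟨lam, hlam, h⟩ ⟨μ, hμ, h'⟩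
      exact ⟨μ * lam, mul_ne_zero hμ hlam, by rw [← map_mulLeft_map_mulLeft, h, h']⟩

/-!
A lattice `Λ` with multiplier ring `ι(𝓞 K)` contains `ι(𝓞 K) · w` for any nonzero `w ∈ Λ`.
Since `ℚΛ` and `ι(K) · w` are both `2`-dimensional over `ℚ`, this forces `Λ ⊆ ι(K) · w`, so
`Λ = ι(J) · w` for the fractional ideal `J = {x ∈ K : ι(x) w ∈ Λ}`. A homothety `λ ι(I) = ι(J)`
between embedded nonzero fractional ideals has `λ = ι(u)` with `u ∈ K`, so `J = u I`, and the
ideal class of `J` is a complete homothety invariant. Conversely, every nonzero ideal embeds as a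
lattice whose multiplier ring is `ι(𝓞 K)`, because invertible ideals have multiplier ring `𝓞 K`.
-/

open scoped nonZeroDivisors
open FractionalIdeal

theorem ClassGroup.mk_eq_mk_iff_exists_spanSingleton_mul {R K : Type*} [CommRing R]
    [IsDedekindDomain R] [Field K] [Algebra R K] [IsFractionRing R K]
    {I J : (FractionalIdeal R⁰ K)ˣ} :
    ClassGroup.mk K I = ClassGroup.mk K J ↔
      ∃ u : K, (I : FractionalIdeal R⁰ K) = spanSingleton R⁰ u * J := by
  rw [← div_eq_one, ← map_div, ClassGroup.mk_eq_one_iff, isPrincipal_iff,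
    Units.val_div_eq_div_val]
  simp only [div_eq_iff (Units.ne_zero J)]

theorem Homothetic.symm {Λ Λ' : AddSubgroup ℂ} (h : Homothetic Λ Λ') : Homothetic Λ' Λ := by
  obtain ⟨lam, hlam, rfl⟩ := h
  exact ⟨lam⁻¹, inv_ne_zero hlam, by
    rw [map_mulLeft_map_mulLeft, inv_mul_cancel₀ hlam, map_mulLeft_one]⟩

theorem Homothetic.trans {Λ Λ' Λ'' : AddSubgroup ℂ} (h : Homothetic Λ Λ')
    (h' : Homothetic Λ' Λ'') : Homothetic Λ Λ'' := by
  obtain ⟨lam, hlam, rfl⟩ := h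
  obtain ⟨μ, hμ, rfl⟩ := h'
  exact ⟨μ * lam, mul_ne_zero hμ hlam, (map_mulLeft_map_mulLeft μ lam Λ).symm⟩

theorem mem_multiplierRing_iff_map_le {Λ : AddSubgroup ℂ} {lam : ℂ} :
    lam ∈ multiplierRing Λ ↔ AddSubgroup.map (AddMonoidHom.mulLeft lam) Λ ≤ Λ :=
  ⟨fun h _ ⟨w, hw, hwz⟩ => hwz ▸ h w hw, fun h w hw => h ⟨w, hw, rfl⟩⟩

namespace IsComplexLattice

variable {Λ : AddSubgroup ℂ}

theorem exists_ne_zero (hΛ : IsComplexLattice Λ) : ∃ w ∈ Λ, w ≠ 0 := by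
  by_contra! h
  exact top_ne_bot (hΛ.2.symm.trans (Submodule.span_eq_bot.2 h))

theorem exists_span_int_eq (hΛ : IsComplexLattice Λ) :
    ∃ v : Fin 2 → ℂ, Submodule.span ℤ (Set.range v) = AddSubgroup.toIntSubmodule Λ := by
  let L := AddSubgroup.toIntSubmodule Λ
  have : DiscreteTopology L := hΛ.1
  have : IsZLattice ℝ L := ⟨hΛ.2⟩
  have hrank : Module.finrank ℤ L = 2 := by
    rw [ZLattice.rank ℝ L, Complex.finrank_real_complex]
  let b := Module.finBasisOfFinrankEq ℤ L hrank
  refine ⟨fun i => b i, ?_⟩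
  change Submodule.span ℤ (Set.range (L.subtype ∘ b)) = L
  rw [Set.range_comp, Submodule.span_image, b.span_eq, Submodule.map_top,
    Submodule.range_subtype]

theorem fg (hΛ : IsComplexLattice Λ) : (AddSubgroup.toIntSubmodule Λ).FG := by
  obtain ⟨v, hv⟩ := hΛ.exists_span_int_eq
  exact hv ▸ Submodule.fg_span (Set.finite_range v)

theorem exists_span_rat_eq (hΛ : IsComplexLattice Λ) :
    ∃ v : Fin 2 → ℂ, Submodule.span ℚ (Λ : Set ℂ) = Submodule.span ℚ (Set.range v) := by
  obtain ⟨v, hv⟩ := hΛ.exists_span_int_eq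
  have hΛv : (Λ : Set ℂ) = Submodule.span ℤ (Set.range v) := by rw [hv]; rfl
  exact ⟨v, by rw [hΛv, Submodule.span_span_of_tower]⟩

end IsComplexLattice

theorem isComplexLattice_of_le {Λ₁ Λ Λ₂ : AddSubgroup ℂ}
    (h₁ : Submodule.span ℝ (Λ₁ : Set ℂ) = ⊤) (h₂ : DiscreteTopology Λ₂) {lam : ℂ}
    (hlam : lam ≠ 0) (hle₁ : AddSubgroup.map (AddMonoidHom.mulLeft lam) Λ₁ ≤ Λ)
    (hle₂ : Λ ≤ Λ₂) : IsComplexLattice Λ := by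
  refine ⟨DiscreteTopology.of_subset h₂ hle₂, eq_top_iff.2 fun z _ => ?_⟩
  have hz : lam⁻¹ * z ∈ Submodule.span ℝ (Λ₁ : Set ℂ) := h₁ ▸ Submodule.mem_top
  have hz' := Submodule.mem_map_of_mem (f := LinearMap.mulLeft ℝ lam) hz
  rw [Submodule.map_span, LinearMap.mulLeft_apply, mul_inv_cancel_left₀ hlam] at hz'
  refine Submodule.span_mono ?_ hz'
  rintro _ ⟨w, hw, rfl⟩
  exact hle₁ ⟨w, hw, rfl⟩

theorem Complex.span_real_eq_top_of_im_ne_zero {M : Submodule ℝ ℂ} {z : ℂ} (hz : z.im ≠ 0)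
    (h1 : 1 ∈ M) (hzM : z ∈ M) : M = ⊤ := by
  have hI : Complex.I = z.im⁻¹ • (z - z.re • 1) := by
    apply Complex.ext <;> simp [hz]
  rw [eq_top_iff, ← Complex.basisOneI.span_eq, Submodule.span_le]
  rintro _ ⟨i, rfl⟩
  fin_cases i
  · simpa using h1
  · simpa [hI] using M.smul_mem z.im⁻¹ (M.sub_mem hzM (M.smul_mem z.re h1))

section IdealLattice

variable {R K : Type*} [CommRing R] [Field K] [Algebra R K] (ι : K →+* ℂ)

def idealLattice (I : FractionalIdeal R⁰ K) : AddSubgroup ℂ :=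
  (I : Submodule R K).toAddSubgroup.map ι.toAddMonoidHom

variable {ι}

theorem mem_idealLattice {I : FractionalIdeal R⁰ K} {z : ℂ} :
    z ∈ idealLattice ι I ↔ ∃ x ∈ I, ι x = z :=
  Iff.rfl

theorem idealLattice_le_idealLattice_iff {I J : FractionalIdeal R⁰ K} :
    idealLattice ι I ≤ idealLattice ι J ↔ I ≤ J := by
  refine ⟨fun h x hx => ?_, fun h _ ⟨x, hx, hxz⟩ => ⟨x, h hx, hxz⟩⟩
  obtain ⟨y, hy, hyx⟩ := h ⟨x, hx, rfl⟩
  rwa [← ι.injective hyx]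

theorem idealLattice_injective : Function.Injective (idealLattice (R := R) ι) :=
  fun _ _ h => le_antisymm (idealLattice_le_idealLattice_iff.1 h.le)
    (idealLattice_le_idealLattice_iff.1 h.ge)

theorem idealLattice_spanSingleton_mul [IsFractionRing R K] (u : K) (I : FractionalIdeal R⁰ K) :
    idealLattice ι (spanSingleton R⁰ u * I) =
      AddSubgroup.map (AddMonoidHom.mulLeft (ι u)) (idealLattice ι I) := by
  ext z
  simp only [mem_idealLattice, mem_singleton_mul, AddSubgroup.mem_map, AddMonoidHom.coe_mulLeft]
  constructor
  · rintro ⟨_, ⟨y, hy, rfl⟩, rfl⟩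
    exact ⟨ι y, ⟨y, hy, rfl⟩, (map_mul ι u y).symm⟩
  · rintro ⟨_, ⟨y, hy, rfl⟩, rfl⟩
    exact ⟨u * y, ⟨y, hy, rfl⟩, map_mul ι u y⟩

theorem exists_eq_of_map_mulLeft_le [IsFractionRing R K] {I J : FractionalIdeal R⁰ K}
    (hI : I ≠ 0) {lam : ℂ}
    (h : AddSubgroup.map (AddMonoidHom.mulLeft lam) (idealLattice ι I) ≤ idealLattice ι J) :
    ∃ u : K, ι u = lam := by
  obtain ⟨x, hxI, hx0⟩ := Submodule.exists_mem_ne_zero_of_ne_bot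
    (by rwa [Ne, ← coe_zero, coeToSubmodule_inj] : (I : Submodule R K) ≠ ⊥)
  obtain ⟨y, -, hy⟩ := h ⟨ι x, ⟨x, hxI, rfl⟩, rfl⟩
  refine ⟨y / x, ?_⟩
  rw [map_div₀, show ι y = lam * ι x from hy, mul_div_cancel_right₀ _ (by simpa using hx0)]

theorem multiplierRing_idealLattice [IsDedekindDomain R] [IsFractionRing R K]
    {I : FractionalIdeal R⁰ K} (hI : I ≠ 0) :
    multiplierRing (idealLattice ι I) = Set.range (ι.comp (algebraMap R K)) := by
  ext lam
  rw [mem_multiplierRing_iff_map_le]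
  constructor
  · intro h
    obtain ⟨u, rfl⟩ := exists_eq_of_map_mulLeft_le hI h
    rw [← idealLattice_spanSingleton_mul, idealLattice_le_idealLattice_iff] at h
    have hu : spanSingleton R⁰ u ≤ 1 := by
      simpa [mul_assoc, mul_inv_cancel₀ hI] using mul_le_mul' h (le_refl I⁻¹)
    obtain ⟨a, rfl⟩ := (mem_one_iff _).1 (spanSingleton_le_iff_mem.1 hu)
    exact ⟨a, rfl⟩
  · rintro ⟨a, rfl⟩
    rw [RingHom.comp_apply, ← idealLattice_spanSingleton_mul, idealLattice_le_idealLattice_iff]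
    exact mul_le_of_le_one_of_le
      (spanSingleton_le_iff_mem.2 ((mem_one_iff _).2 ⟨a, rfl⟩)) le_rfl

theorem homothetic_idealLattice_iff [IsDedekindDomain R] [IsFractionRing R K]
    {I J : (FractionalIdeal R⁰ K)ˣ} :
    Homothetic (idealLattice ι (I : FractionalIdeal R⁰ K))
        (idealLattice ι (J : FractionalIdeal R⁰ K)) ↔
      ClassGroup.mk K I = ClassGroup.mk K J := by
  constructor
  · rintro ⟨lam, -, h⟩
    obtain ⟨u, rfl⟩ := exists_eq_of_map_mulLeft_le (Units.ne_zero I) h.le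
    rw [← idealLattice_spanSingleton_mul] at h
    exact (ClassGroup.mk_eq_mk_iff_exists_spanSingleton_mul.2
      ⟨u, idealLattice_injective h.symm⟩).symm
  · intro h
    obtain ⟨u, hu⟩ := ClassGroup.mk_eq_mk_iff_exists_spanSingleton_mul.1 h
    have hu0 : u ≠ 0 := by
      rintro rfl
      exact Units.ne_zero I (by rw [hu, spanSingleton_zero, zero_mul])
    refine Homothetic.symm ⟨ι u, by simpa using hu0, ?_⟩
    rw [← idealLattice_spanSingleton_mul, hu]

end IdealLattice

section NumberField

variable {K : Type*} [Field K] [NumberField K] {ι : K →+* ℂ}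

theorem span_real_range_integralBasis (him : ∃ x : K, (ι x).im ≠ 0) :
    Submodule.span ℝ (Set.range (ι ∘ integralBasis K)) = ⊤ := by
  have hK (x : K) : ι x ∈ Submodule.span ℝ (Set.range (ι ∘ integralBasis K)) := by
    have hx := Submodule.mem_map_of_mem (f := ι.toRatAlgHom.toLinearMap)
      ((integralBasis K).mem_span x)
    rw [Submodule.map_span, ← Set.range_comp] at hx
    exact Submodule.span_le_restrictScalars ℚ ℝ _ hx
  obtain ⟨x, hx⟩ := him
  exact Complex.span_real_eq_top_of_im_ne_zero hx (map_one ι ▸ hK 1) (hK x)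

theorem toIntSubmodule_idealLattice_one :
    AddSubgroup.toIntSubmodule (idealLattice ι (1 : FractionalIdeal (𝓞 K)⁰ K)) =
      Submodule.span ℤ (Set.range (ι ∘ integralBasis K)) := by
  let f : 𝓞 K →ₗ[ℤ] ℂ := (ι.comp (algebraMap (𝓞 K) K)).toAddMonoidHom.toIntLinearMap
  have hf : AddSubgroup.toIntSubmodule (idealLattice ι (1 : FractionalIdeal (𝓞 K)⁰ K)) =
      LinearMap.range f := by
    ext z
    change z ∈ idealLattice ι (1 : FractionalIdeal (𝓞 K)⁰ K) ↔ _
    rw [mem_idealLattice, LinearMap.mem_range]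
    constructor
    · rintro ⟨_, hx, rfl⟩
      obtain ⟨a, rfl⟩ := (mem_one_iff _).1 hx
      exact ⟨a, rfl⟩
    · rintro ⟨a, rfl⟩
      exact ⟨_, (mem_one_iff _).2 ⟨a, rfl⟩, rfl⟩
  rw [hf, LinearMap.range_eq_map, ← (RingOfIntegers.basis K).span_eq, Submodule.map_span,
    ← Set.range_comp]
  congr 2
  ext i
  simp [f, integralBasis_apply]

theorem isComplexLattice_idealLattice_one (hdeg : Module.finrank ℚ K = 2)
    (him : ∃ x : K, (ι x).im ≠ 0) :
    IsComplexLattice (idealLattice ι (1 : FractionalIdeal (𝓞 K)⁰ K)) := by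
  let b : Module.Basis (Module.Free.ChooseBasisIndex ℤ (𝓞 K)) ℝ ℂ :=
    basisOfTopLeSpanOfCardEqFinrank _ (span_real_range_integralBasis him).ge
      (by rw [← Module.finrank_eq_card_chooseBasisIndex, RingOfIntegers.rank, hdeg,
          Complex.finrank_real_complex])
  have hb : AddSubgroup.toIntSubmodule (idealLattice ι (1 : FractionalIdeal (𝓞 K)⁰ K)) =
      Submodule.span ℤ (Set.range b) := by
    rw [coe_basisOfTopLeSpanOfCardEqFinrank, toIntSubmodule_idealLattice_one]
  refine ⟨?_, ?_⟩
  · change DiscreteTopology (AddSubgroup.toIntSubmodule (idealLattice ι _))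
    rw [hb]
    infer_instance
  · change Submodule.span ℝ (AddSubgroup.toIntSubmodule (idealLattice ι _) : Set ℂ) = ⊤
    rw [hb, Submodule.span_span_of_tower, b.span_eq]

theorem isComplexLattice_idealLattice_coeIdeal (hdeg : Module.finrank ℚ K = 2)
    (him : ∃ x : K, (ι x).im ≠ 0) {I : Ideal (𝓞 K)} (hI : I ≠ ⊥) :
    IsComplexLattice (idealLattice ι (I : FractionalIdeal (𝓞 K)⁰ K)) := by
  obtain ⟨a, haI, ha0⟩ := Submodule.exists_mem_ne_zero_of_ne_bot hI
  have hone := isComplexLattice_idealLattice_one hdeg him (ι := ι)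
  refine isComplexLattice_of_le hone.2 hone.1 (lam := ι (algebraMap (𝓞 K) K a))
    (by simpa using ha0) ?_ (idealLattice_le_idealLattice_iff.2 coeIdeal_le_one)
  rw [← idealLattice_spanSingleton_mul, mul_one, idealLattice_le_idealLattice_iff,
    spanSingleton_le_iff_mem, mem_coeIdeal]
  exact ⟨a, haI, rfl⟩

theorem IsComplexLattice.exists_mul_eq (hdeg : Module.finrank ℚ K = 2) {Λ : AddSubgroup ℂ}
    (hΛ : IsComplexLattice Λ) {w : ℂ} (hw : w ≠ 0) (hR : ∀ a : 𝓞 K, ι a * w ∈ Λ) {z : ℂ}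
    (hz : z ∈ Λ) : ∃ x : K, ι x * w = z := by
  obtain ⟨v, hv⟩ := hΛ.exists_span_rat_eq
  let f : K →ₗ[ℚ] ℂ := LinearMap.mulRight ℚ w ∘ₗ ι.toRatAlgHom.toLinearMap
  have hf : Function.Injective f := fun x y h => ι.injective (mul_right_cancel₀ hw h)
  have hle : LinearMap.range f ≤ Submodule.span ℚ (Set.range v) := by
    rw [LinearMap.range_eq_map, ← (integralBasis K).span_eq, Submodule.map_span, ← hv,
      Submodule.span_le]
    rintro _ ⟨_, ⟨i, rfl⟩, rfl⟩
    exact Submodule.subset_span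
      (by simpa [f, integralBasis_apply] using hR (RingOfIntegers.basis K i))
  have := FiniteDimensional.span_of_finite ℚ (Set.finite_range v)
  have heq : LinearMap.range f = Submodule.span ℚ (Set.range v) :=
    Submodule.eq_of_le_of_finrank_le hle (by
      rw [LinearMap.finrank_range_of_inj hf, hdeg]
      exact (finrank_range_le_card v).trans (by simp))
  obtain ⟨x, hx⟩ : z ∈ LinearMap.range f := heq ▸ hv ▸ Submodule.subset_span hz
  exact ⟨x, hx⟩

def coordIdeal (ι : K →+* ℂ) (Λ : AddSubgroup ℂ)
    (hR : Set.range (ι.comp (algebraMap (𝓞 K) K)) ⊆ multiplierRing Λ) (w : ℂ) :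
    Submodule (𝓞 K) K where
  carrier := {x | ι x * w ∈ Λ}
  add_mem' {x y} hx hy := show ι (x + y) * w ∈ Λ by rw [map_add, add_mul]; exact Λ.add_mem hx hy
  zero_mem' := show ι 0 * w ∈ Λ by rw [map_zero, zero_mul]; exact Λ.zero_mem
  smul_mem' a x hx := show ι (a • x) * w ∈ Λ by
    rw [Algebra.smul_def, map_mul, mul_assoc]; exact hR ⟨a, rfl⟩ _ hx

theorem exists_homothetic_idealLattice (hdeg : Module.finrank ℚ K = 2) {Λ : AddSubgroup ℂ}
    (hΛ : IsComplexLattice Λ)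
    (hR : Set.range (ι.comp (algebraMap (𝓞 K) K)) ⊆ multiplierRing Λ) :
    ∃ J : (FractionalIdeal (𝓞 K)⁰ K)ˣ,
      Homothetic (idealLattice ι (J : FractionalIdeal (𝓞 K)⁰ K)) Λ := by
  obtain ⟨w, hw, hw0⟩ := hΛ.exists_ne_zero
  let J := coordIdeal ι Λ hR w
  have hΛJ (z : ℂ) : z ∈ Λ ↔ ∃ x ∈ J, ι x * w = z := by
    refine ⟨fun hz => ?_, fun ⟨x, hx, hxz⟩ => hxz ▸ hx⟩
    obtain ⟨x, hx⟩ := hΛ.exists_mul_eq hdeg hw0 (fun a => hR ⟨a, rfl⟩ w hw) hz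
    exact ⟨x, show ι x * w ∈ Λ from hx ▸ hz, hx⟩
  let f : K →ₗ[ℤ] ℂ := ((AddMonoidHom.mulRight w).comp ι.toAddMonoidHom).toIntLinearMap
  have hJ : J.FG := by
    refine Submodule.FG.of_restrictScalars ℤ (Submodule.fg_of_fg_map_injective f
      (fun x y h => ι.injective (mul_right_cancel₀ hw0 h)) ?_)
    have hmap : Submodule.map f (J.restrictScalars ℤ) = AddSubgroup.toIntSubmodule Λ :=
      SetLike.ext fun z => (hΛJ z).symm
    exact hmap ▸ hΛ.fg
  let J' : FractionalIdeal (𝓞 K)⁰ K := ⟨J, isFractional_of_fg hJ⟩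
  have hJ' : J' ≠ 0 := by
    intro h
    have h1 : (1 : K) ∈ J' := show ι 1 * w ∈ Λ by rwa [map_one, one_mul]
    rw [h, mem_zero_iff] at h1
    exact one_ne_zero h1
  refine ⟨Units.mk0 J' hJ', w, hw0, ?_⟩
  ext z
  rw [hΛJ, AddSubgroup.mem_map]
  constructor
  · rintro ⟨_, ⟨x, hx, rfl⟩, rfl⟩
    exact ⟨x, hx, mul_comm _ _⟩
  · rintro ⟨x, hx, rfl⟩
    exact ⟨ι x, ⟨x, hx, rfl⟩, mul_comm _ _⟩

end NumberField

/-- Let `K` be an imaginary quadratic field, embedded in `ℂ` by `ι`.  The homothety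
classes of lattices `Λ ⊂ ℂ` with multiplier ring `{λ : λΛ ⊆ Λ} = ι(𝓞 K)` are in bijection
with the ideal class group `Cl_K`; in particular there are exactly `h_K = #Cl_K`
isomorphism classes of complex elliptic curves with CM by `𝓞 K`. -/
theorem cm_lattices_biject_with_class_group
    (K : Type*) [Field K] [NumberField K] (hdeg : Module.finrank ℚ K = 2)
    (ι : K →+* ℂ) (him : ∃ x : K, (ι x).im ≠ 0) :
    (∃ F : Quotient (CMLatticeSetoid (Set.range ⇑(ι.comp (algebraMap (𝓞 K) K)))) →
        ClassGroup (𝓞 K), Function.Bijective F) ∧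
      Nat.card (Quotient (CMLatticeSetoid (Set.range ⇑(ι.comp (algebraMap (𝓞 K) K))))) =
        Nat.card (ClassGroup (𝓞 K)) := by
  choose J hJ using fun Λ : {Λ // IsComplexLattice Λ ∧
      multiplierRing Λ = Set.range ⇑(ι.comp (algebraMap (𝓞 K) K))} =>
    exists_homothetic_idealLattice hdeg Λ.2.1 Λ.2.2.ge
  let F : Quotient (CMLatticeSetoid (Set.range ⇑(ι.comp (algebraMap (𝓞 K) K)))) →
      ClassGroup (𝓞 K) :=
    Quotient.lift (fun Λ => ClassGroup.mk K (J Λ)) fun Λ Λ' h =>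
      homothetic_idealLattice_iff.1 ((hJ Λ).trans (h.trans (hJ Λ').symm))
  have hF : Function.Bijective F := by
    constructor
    · rintro ⟨Λ⟩ ⟨Λ'⟩ h
      exact Quotient.sound (((hJ Λ).symm.trans (homothetic_idealLattice_iff.2 h)).trans (hJ Λ'))
    · intro c
      obtain ⟨I, rfl⟩ := ClassGroup.mk0_surjective c
      have hI : (I : Ideal (𝓞 K)) ≠ ⊥ := mem_nonZeroDivisors_iff_ne_zero.1 I.2
      refine ⟨⟦⟨idealLattice ι (FractionalIdeal.mk0 K I : FractionalIdeal (𝓞 K)⁰ K),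
        isComplexLattice_idealLattice_coeIdeal hdeg him hI,
        multiplierRing_idealLattice (Units.ne_zero _)⟩⟧, ?_⟩
      rw [← ClassGroup.mk_mk0 K]
      exact homothetic_idealLattice_iff.1 (hJ _)
  exact ⟨⟨F, hF⟩, Nat.card_eq_of_bijective F hF⟩
end

section
/- The Dedekind eta function satisfies the pentagonal number identity: ∏_{n≥1}(1 − q^n) = Σ_{n∈Z} (−1)^n q^{n(3n−1)/2} for |q| < 1. -/
/-!
In any Hausdorff topological ring and for topologically nilpotent `x`, the pentagonal number
theorem follows from the telescoping recursion `A k = 1 - x^(2k+3) - x^(3k+5) A (k+1)` for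
`A k = ∑ₙ x^((k+1)n) ∏_{i ≤ n} (1 - x^(k+i+1))`, provided these series converge and the remainders
`x^((k+1)(3k+4)/2) A k` tend to zero (`Pentagonal.tprod_one_sub_pow`). When `‖x‖ < 1`, every finite
product `∏ (1 - x^(k+i+1))` has norm at most `exp (∑ ‖x‖^i) = exp (1 - ‖x‖)⁻¹`, so each `A k` is
dominated by one geometric series, uniformly in `k`; this gives all the convergence conditions.
The sum over `ℤ` is recovered by pairing the terms at `-k` and `k + 1`.
-/

open Filter Topology Finset

lemma le_pentagonal_neg (k : ℕ) : k ≤ pentagonal (-k) := by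
  have := two_mul_natCast_pentagonal_neg k
  zify
  nlinarith

lemma le_pentagonal_add_one (k : ℕ) : k ≤ pentagonal (k + 1) := by
  grind [natCast_pentagonal]

theorem HasSum.nat_neg_add_add_one {M : Type*} [AddCommMonoid M] [TopologicalSpace M] {m : M}
    {f : ℤ → M} (hf : HasSum f m) : HasSum (fun n : ℕ ↦ f (-n) + f (n + 1)) m := by
  simpa using ((Equiv.neg ℤ).hasSum_iff.mpr hf).nat_add_neg_add_one

lemma Finset.norm_prod_one_sub_le_exp_sum {ι R : Type*} [NormedCommRing R] [NormOneClass R]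
    (s : Finset ι) (f : ι → R) : ‖∏ i ∈ s, (1 - f i)‖ ≤ Real.exp (∑ i ∈ s, ‖f i‖) := by
  have h := s.norm_prod_one_add_sub_one_le (-f)
  simp only [Pi.neg_apply, norm_neg, ← sub_eq_add_neg] at h
  linarith [norm_le_norm_sub_add (∏ i ∈ s, (1 - f i)) 1, norm_one (α := R)]

lemma norm_neg_one_pow_mul {R : Type*} [SeminormedRing R] (k : ℕ) (y : R) :
    ‖(-1) ^ k * y‖ = ‖y‖ := by
  rcases neg_one_pow_eq_or R k with h | h <;> simp [h]

section NormedCommRing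

variable {R : Type*} [NormedCommRing R] [NormOneClass R] {x : R}

lemma norm_pow_le_pow_of_norm_le_one (hx : ‖x‖ ≤ 1) {m n : ℕ} (h : m ≤ n) :
    ‖x ^ n‖ ≤ ‖x‖ ^ m :=
  (norm_pow_le x n).trans (pow_le_pow_of_le_one (norm_nonneg x) hx h)

lemma norm_prod_range_one_sub_pow_le (hx : ‖x‖ < 1) (k n : ℕ) :
    ‖∏ i ∈ range n, (1 - x ^ (k + i + 1))‖ ≤ Real.exp (1 - ‖x‖)⁻¹ := calc
  _ ≤ Real.exp (∑ i ∈ range n, ‖x ^ (k + i + 1)‖) := norm_prod_one_sub_le_exp_sum _ _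
  _ ≤ Real.exp (∑ i ∈ range n, ‖x‖ ^ i) := by
    gcongr with i
    exact norm_pow_le_pow_of_norm_le_one hx.le (by omega)
  _ ≤ Real.exp (1 - ‖x‖)⁻¹ := by
    gcongr
    simpa [← range_eq_Ico] using geom_sum_Ico_le_of_lt_one (m := 0) (n := n) (norm_nonneg x) hx

lemma norm_pow_mul_prod_range_one_sub_pow_le (hx : ‖x‖ < 1) (k n : ℕ) :
    ‖x ^ ((k + 1) * n) * ∏ i ∈ range (n + 1), (1 - x ^ (k + i + 1))‖ ≤
      Real.exp (1 - ‖x‖)⁻¹ * ‖x‖ ^ n := calc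
  _ ≤ ‖x‖ ^ n * Real.exp (1 - ‖x‖)⁻¹ :=
    (norm_mul_le _ _).trans <| mul_le_mul (norm_pow_le_pow_of_norm_le_one hx.le (by nlinarith))
      (norm_prod_range_one_sub_pow_le hx k _) (norm_nonneg _) (by positivity)
  _ = _ := mul_comm _ _

lemma summable_pow_mul_prod_range_one_sub_pow [CompleteSpace R] (hx : ‖x‖ < 1) (k : ℕ) :
    Summable fun n ↦ x ^ ((k + 1) * n) * ∏ i ∈ range (n + 1), (1 - x ^ (k + i + 1)) :=
  .of_norm_bounded ((summable_geometric_of_lt_one (norm_nonneg x) hx).mul_left _)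
    (norm_pow_mul_prod_range_one_sub_pow_le hx k)

lemma norm_tsum_pow_mul_prod_range_one_sub_pow_le (hx : ‖x‖ < 1) (k : ℕ) :
    ‖∑' n, x ^ ((k + 1) * n) * ∏ i ∈ range (n + 1), (1 - x ^ (k + i + 1))‖ ≤
      Real.exp (1 - ‖x‖)⁻¹ * (1 - ‖x‖)⁻¹ :=
  tsum_of_norm_bounded ((hasSum_geometric_of_lt_one (norm_nonneg x) hx).mul_left _)
    (norm_pow_mul_prod_range_one_sub_pow_le hx k)

lemma tendsto_pentagonal_remainder (hx : ‖x‖ < 1) :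
    Tendsto (fun k ↦ (-1) ^ (k + 1) * x ^ ((k + 1) * (3 * k + 4) / 2) *
      ∑' n, x ^ ((k + 1) * n) * ∏ i ∈ range (n + 1), (1 - x ^ (k + i + 1))) atTop (𝓝 0) := by
  have hgeom := (tendsto_pow_atTop_nhds_zero_of_lt_one (norm_nonneg x) hx).mul_const
    (Real.exp (1 - ‖x‖)⁻¹ * (1 - ‖x‖)⁻¹)
  rw [zero_mul] at hgeom
  refine squeeze_zero_norm (fun k ↦ ?_) hgeom
  grw [norm_mul_le, norm_neg_one_pow_mul, norm_tsum_pow_mul_prod_range_one_sub_pow_le hx,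
    norm_pow_le_pow_of_norm_le_one hx.le (show k ≤ (k + 1) * (3 * k + 4) / 2 by grind)]
  have := sub_pos.2 hx
  positivity

lemma multipliable_one_sub_pow [CompleteSpace R] (hx : ‖x‖ < 1) (k : ℕ) :
    Multipliable fun n ↦ 1 - x ^ (n + k + 1) := by
  simp_rw [sub_eq_add_neg]
  refine multipliable_one_add_of_summable <|
    (summable_geometric_of_lt_one (norm_nonneg x) hx).of_nonneg_of_le (fun _ ↦ norm_nonneg _)
      fun n ↦ ?_
  rw [norm_neg]
  exact norm_pow_le_pow_of_norm_le_one hx.le (by omega)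

lemma summable_pow_pentagonal_sub [CompleteSpace R] (hx : ‖x‖ < 1) :
    Summable fun k : ℕ ↦ (-1) ^ k * (x ^ pentagonal (-k) - x ^ pentagonal (k + 1)) := by
  refine .of_norm_bounded ((summable_geometric_of_lt_one (norm_nonneg x) hx).mul_left 2)
    fun k ↦ ?_
  grw [norm_neg_one_pow_mul, norm_sub_le,
    norm_pow_le_pow_of_norm_le_one hx.le (le_pentagonal_neg k),
    norm_pow_le_pow_of_norm_le_one hx.le (le_pentagonal_add_one k)]
  exact (two_mul _).ge

theorem tprod_one_sub_pow_eq_tsum_pow_pentagonal_sub [CompleteSpace R] (hx : ‖x‖ < 1) :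
    ∏' n, (1 - x ^ (n + 1)) =
      ∑' k : ℕ, (-1) ^ k * (x ^ pentagonal (-k) - x ^ pentagonal (k + 1)) :=
  Pentagonal.tprod_one_sub_pow (tendsto_pow_atTop_nhds_zero_of_norm_lt_one hx)
    (summable_pow_mul_prod_range_one_sub_pow hx) (multipliable_one_sub_pow hx)
    (summable_pow_pentagonal_sub hx) (tendsto_pentagonal_remainder hx)

end NormedCommRing

section NormedField

variable {𝕜 : Type*} [NormedField 𝕜] [CompleteSpace 𝕜] {x : 𝕜}

lemma summable_neg_one_zpow_mul_pow_pentagonal (hx : ‖x‖ < 1) :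
    Summable fun n : ℤ ↦ (-1) ^ n * x ^ pentagonal n :=
  .of_norm_bounded
    ((summable_geometric_of_lt_one (norm_nonneg x) hx).comp_injective pentagonal_injective)
    fun n ↦ by simp [norm_zpow]

theorem tprod_one_sub_pow_eq_tsum_pentagonal (hx : ‖x‖ < 1) :
    ∏' n, (1 - x ^ (n + 1)) = ∑' n : ℤ, (-1) ^ n * x ^ pentagonal n := by
  rw [tprod_one_sub_pow_eq_tsum_pow_pentagonal_sub hx,
    ← (summable_neg_one_zpow_mul_pow_pentagonal hx).hasSum.nat_neg_add_add_one.tsum_eq]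
  congr 1 with k
  rw [zpow_neg, zpow_add_one₀ (by norm_num), zpow_natCast, ← inv_pow, inv_neg_one]
  ring

end NormedField

/-- The pentagonal number identity satisfied by the Dedekind eta function:
`∏_{n≥1} (1 - qⁿ) = Σ_{n∈ℤ} (-1)ⁿ q^{n(3n-1)/2}` for `|q| < 1`. -/
theorem pentagonal_number_identity (q : ℂ) (hq : ‖q‖ < 1) :
    ∏' n : ℕ, (1 - q ^ (n + 1)) = ∑' n : ℤ, (-1 : ℂ) ^ n * q ^ (n * (3 * n - 1) / 2).toNat :=
  tprod_one_sub_pow_eq_tsum_pentagonal hq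
end
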